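/- For all integers k₁ ≥ 1 and k₂ ≥ 0, the number of set partitions of {1,...,k₁+k₂} in which every block X satisfies min(X) ≤ k₁ equals ∑_{j≥0} j! · B(k₁,j) · S(k₂,j), where B(k₁,j) = ∑_r C(r,j) S(k₁,r). -/

import Mathlib

open Finset Nat

open Finset Nat

def Cnd {n : ℕ} (g : Fin n → Fin n) : Prop := (∀ i, g i ≤ i) ∧ (∀ i, g (g i) = g i)

instance {n : ℕ} : DecidablePred (Cnd (n := n)) := fun g => by unfold Cnd; infer_instance

def fixc {n : ℕ} (g : Fin n → Fin n) : ℕ := ∑ i, if g i = i then 1 else 0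

def restr {n : ℕ} (g : Fin (n+1) → Fin (n+1)) (i : Fin n) : Fin n :=
  if h : (g i.castSucc).val < n then ⟨(g i.castSucc).val, h⟩ else i

def extend {n : ℕ} (h : Fin n → Fin n) (j : Fin (n+1)) (i : Fin (n+1)) : Fin (n+1) :=
  if hi : i.val < n then (h ⟨i.val, hi⟩).castSucc else j

lemma restr_castSucc {n : ℕ} {g : Fin (n+1) → Fin (n+1)} (hg : ∀ i, g i ≤ i) (i : Fin n) :
    (restr g i).castSucc = g i.castSucc := by
  have h : (g i.castSucc).val < n := lt_of_le_of_lt (hg i.castSucc) i.isLt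
  simp [restr, h, Fin.ext_iff]

lemma cnd_restr {n : ℕ} {g : Fin (n+1) → Fin (n+1)} (hg : Cnd g) : Cnd (restr g) := by
  obtain ⟨h1, h2⟩ := hg
  constructor
  · intro i
    have h3 := h1 i.castSucc
    have e : (restr g i).val = (g i.castSucc).val := by
      rw [← restr_castSucc h1 i]; rfl
    rw [Fin.le_def] at h3 ⊢
    simp only [Fin.coe_castSucc] at h3
    omega
  · intro i
    have e1 := restr_castSucc h1 i
    have e2 := restr_castSucc h1 (restr g i)
    apply Fin.castSucc_injective
    rw [e2, e1, h2]

lemma fixc_restr {n : ℕ} {g : Fin (n+1) → Fin (n+1)} (hg : ∀ i, g i ≤ i) :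
    fixc g = fixc (restr g) + (if g (Fin.last n) = Fin.last n then 1 else 0) := by
  unfold fixc
  rw [Fin.sum_univ_castSucc]
  congr 1
  apply Finset.sum_congr rfl
  intro i _
  rw [← restr_castSucc hg i]; simp only [Fin.castSucc_inj]

lemma restr_determines {n : ℕ} {g g' : Fin (n+1) → Fin (n+1)} (hg : ∀ i, g i ≤ i)
    (hg' : ∀ i, g' i ≤ i) (hr : restr g = restr g') (hl : g (Fin.last n) = g' (Fin.last n)) :
    g = g' := by
  funext i
  induction i using Fin.lastCases with
  | last => exact hl
  | cast j => rw [← restr_castSucc hg j, ← restr_castSucc hg' j, hr]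

lemma restr_extend {n : ℕ} (h : Fin n → Fin n) (j : Fin (n+1)) : restr (extend h j) = h := by
  funext i
  have : (extend h j) i.castSucc = (h i).castSucc := by
    simp [extend, i.isLt, Fin.castSucc]
  simp [restr, this, Fin.ext_iff]

lemma extend_last {n : ℕ} (h : Fin n → Fin n) (j : Fin (n+1)) :
    extend h j (Fin.last n) = j := by simp [extend]

lemma extend_le {n : ℕ} {h : Fin n → Fin n} (hh : ∀ i, h i ≤ i) {j : Fin (n+1)}
    (hj : j ≤ Fin.last n) : ∀ i, extend h j i ≤ i := by
  intro i
  by_cases hi : i.val < n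
  · have := hh ⟨i.val, hi⟩
    rw [Fin.le_def] at this ⊢
    simpa [extend, hi] using this
  · have : i = Fin.last n := by rw [Fin.ext_iff]; simp [Fin.last]; omega
    subst this
    simpa [extend] using hj

lemma extend_idem_aux {n : ℕ} {h : Fin n → Fin n} (h2 : ∀ i, h (h i) = h i)
    {j : Fin (n+1)} (i : Fin (n+1)) (hi : i.val < n) :
    extend h j (extend h j i) = extend h j i := by
  simp only [extend, hi, reduceDIte]
  have hv : ((h ⟨i.val, hi⟩).castSucc : Fin (n+1)).val < n := (h ⟨i.val, hi⟩).isLt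
  rw [dif_pos hv]
  have e : (⟨((h ⟨i.val, hi⟩).castSucc).val, hv⟩ : Fin n) = h ⟨i.val, hi⟩ := Fin.ext rfl
  rw [e, h2]

lemma cnd_extend_last {n : ℕ} {h : Fin n → Fin n} (hh : Cnd h) :
    Cnd (extend h (Fin.last n)) := by
  refine ⟨extend_le hh.1 le_rfl, ?_⟩
  intro i
  by_cases hi : i.val < n
  · exact extend_idem_aux hh.2 i hi
  · have : i = Fin.last n := by rw [Fin.ext_iff]; simp [Fin.last]; omega
    subst this
    rw [extend_last, extend_last]

lemma cnd_extend_fix {n : ℕ} {h : Fin n → Fin n} (hh : Cnd h) {j : Fin n} (hj : h j = j) :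
    Cnd (extend h j.castSucc) := by
  refine ⟨extend_le hh.1 (Fin.le_last _), ?_⟩
  intro i
  by_cases hi : i.val < n
  · exact extend_idem_aux hh.2 i hi
  · have : i = Fin.last n := by rw [Fin.ext_iff]; simp [Fin.last]; omega
    subst this
    rw [extend_last]
    have hv : (j.castSucc : Fin (n+1)).val < n := j.isLt
    simp only [extend, hv, reduceDIte]
    have e : (⟨(j.castSucc : Fin (n+1)).val, hv⟩ : Fin n) = j := Fin.ext rfl
    rw [e, hj]

def stirling : ℕ → ℕ → ℕ
  | 0, 0 => 1
  | 0, _ + 1 => 0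
  | _ + 1, 0 => 0
  | n + 1, j + 1 => (j + 1) * stirling n (j + 1) + stirling n j

def AA (n r : ℕ) : Finset (Fin n → Fin n) := univ.filter fun g => Cnd g ∧ fixc g = r

lemma fixc_eq_card {n : ℕ} (g : Fin n → Fin n) :
    fixc g = (univ.filter fun i => g i = i).card := by
  rw [Finset.card_filter]; rfl

lemma fixc_pos {n : ℕ} {g : Fin (n+1) → Fin (n+1)} (hg : Cnd g) : 1 ≤ fixc g := by
  have h0 : g 0 = 0 := Fin.le_zero_iff.mp (hg.1 0)
  unfold fixc
  calc 1 = (if g 0 = 0 then 1 else 0) := by simp [h0]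
    _ ≤ _ := Finset.single_le_sum (f := fun i => if g i = i then 1 else 0)
        (fun i _ => by positivity) (mem_univ 0)

lemma last_fix {n : ℕ} {g : Fin (n+1) → Fin (n+1)} (hc : Cnd g)
    (hlt : (g (Fin.last n)).val < n) :
    restr g ⟨(g (Fin.last n)).val, hlt⟩ = ⟨(g (Fin.last n)).val, hlt⟩ := by
  apply Fin.castSucc_injective
  rw [restr_castSucc hc.1]
  have e : (Fin.castSucc ⟨(g (Fin.last n)).val, hlt⟩ : Fin (n+1)) = g (Fin.last n) :=
    Fin.ext rfl
  rw [e, hc.2]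

lemma last_lt_of_ne {n : ℕ} {g : Fin (n+1) → Fin (n+1)}
    (hne : g (Fin.last n) ≠ Fin.last n) : (g (Fin.last n)).val < n := by
  have h1 := (g (Fin.last n)).isLt
  have h2 : (g (Fin.last n)).val ≠ n := fun hv => hne (Fin.ext (by simp [hv]))
  omega

lemma fiber_card_fix {n r : ℕ} {h : Fin n → Fin n} (hh : Cnd h) (hf : fixc h = r + 1) :
    ((AA (n+1) (r+1)).filter (fun g => restr g = h)).card = r + 1 := by
  have hcard : (univ.filter (fun j : Fin n => h j = j)).card = r + 1 := by
    rw [← fixc_eq_card, hf]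
  refine Eq.trans ?_ hcard
  have hmem : ∀ g ∈ (AA (n+1) (r+1)).filter (fun g => restr g = h),
      Cnd g ∧ fixc g = r + 1 ∧ restr g = h := by
    intro g hg
    simp only [AA, Finset.mem_filter, Finset.mem_univ, true_and] at hg
    exact ⟨hg.1.1, hg.1.2, hg.2⟩
  have hne : ∀ g ∈ (AA (n+1) (r+1)).filter (fun g => restr g = h),
      g (Fin.last n) ≠ Fin.last n := by
    intro g hg hlast
    obtain ⟨hc, hfg, hr⟩ := hmem g hg
    have := fixc_restr hc.1 (g := g)
    rw [hr, if_pos hlast, hf] at this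
    omega
  refine Finset.card_bij'
    (fun g hg => (⟨(g (Fin.last n)).val, last_lt_of_ne (hne g hg)⟩ : Fin n))
    (fun b _ => extend h b.castSucc) ?_ ?_ ?_ ?_
  · intro g hg
    obtain ⟨hc, hfg, hr⟩ := hmem g hg
    simp only [Finset.mem_filter, Finset.mem_univ, true_and]
    rw [← hr]
    exact last_fix hc (last_lt_of_ne (hne g hg))
  · intro b hb
    simp only [Finset.mem_filter, Finset.mem_univ, true_and] at hb
    have hc := cnd_extend_fix hh hb
    have hrr := restr_extend h b.castSucc
    have hlast : extend h b.castSucc (Fin.last n) = b.castSucc := extend_last _ _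
    have hnl : (b.castSucc : Fin (n+1)) ≠ Fin.last n := (Fin.castSucc_lt_last b).ne
    simp only [AA, Finset.mem_filter, Finset.mem_univ, true_and]
    refine ⟨⟨hc, ?_⟩, hrr⟩
    rw [fixc_restr hc.1, hrr, hlast, if_neg hnl, hf]
  · intro g hg
    obtain ⟨hc, hfg, hr⟩ := hmem g hg
    have hb : h (⟨(g (Fin.last n)).val, last_lt_of_ne (hne g hg)⟩ : Fin n) =
        ⟨(g (Fin.last n)).val, last_lt_of_ne (hne g hg)⟩ := by
      rw [← hr]; exact last_fix hc (last_lt_of_ne (hne g hg))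
    apply restr_determines (cnd_extend_fix hh hb).1 hc.1
    · rw [restr_extend, hr]
    · rw [extend_last]; exact Fin.ext rfl
  · intro b hb
    simp only [Fin.ext_iff]
    rw [extend_last]
    simp

lemma fiber_card_one {n r : ℕ} {h : Fin n → Fin n} (hh : Cnd h) (hf : fixc h = r) :
    ((AA (n+1) (r+1)).filter (fun g => restr g = h)).card = 1 := by
  rw [Finset.card_eq_one]
  refine ⟨extend h (Fin.last n), ?_⟩
  ext g
  simp only [Finset.mem_filter, Finset.mem_singleton, AA, Finset.mem_univ, true_and]
  constructor
  · rintro ⟨⟨hc, hfg⟩, hr⟩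
    have hlast : g (Fin.last n) = Fin.last n := by
      by_contra hne
      have heq := fixc_restr hc.1 (g := g)
      rw [hr, if_neg hne] at heq
      omega
    apply restr_determines hc.1 (cnd_extend_last hh).1
    · rw [hr, restr_extend]
    · rw [hlast, extend_last]
  · rintro rfl
    have hc := cnd_extend_last hh
    refine ⟨⟨hc, ?_⟩, restr_extend _ _⟩
    rw [fixc_restr hc.1, restr_extend, extend_last, if_pos rfl, hf]

lemma card_AA : ∀ n r, (AA n r).card = stirling n r := by
  intro n
  induction n with
  | zero =>
    intro r
    have hcnd : ∀ g : Fin 0 → Fin 0, Cnd g := fun g => ⟨fun i => i.elim0, fun i => i.elim0⟩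
    have hfix : ∀ g : Fin 0 → Fin 0, fixc g = 0 := fun g => by simp [fixc]
    match r with
    | 0 =>
      rw [show stirling 0 0 = 1 from rfl]
      rw [show AA 0 0 = univ from Finset.filter_true_of_mem fun g _ => ⟨hcnd g, hfix g⟩]
      simp
    | r+1 =>
      rw [show stirling 0 (r+1) = 0 from rfl]
      rw [show AA 0 (r+1) = ∅ from Finset.filter_false_of_mem fun g _ hg => by
        have := hfix g; omega]
      simp
  | succ n ih =>
    intro r
    match r with
    | 0 =>
      rw [show stirling (n+1) 0 = 0 from rfl]
      rw [show AA (n+1) 0 = ∅ from Finset.filter_false_of_mem fun g _ hg => by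
        have := fixc_pos hg.1; omega]
      simp
    | r+1 =>
      rw [show stirling (n+1) (r+1) = (r+1) * stirling n (r+1) + stirling n r from rfl]
      have hmaps : ∀ g ∈ AA (n+1) (r+1), restr g ∈ AA n (r+1) ∪ AA n r := by
        intro g hg
        simp only [AA, Finset.mem_filter, Finset.mem_univ, true_and] at hg
        obtain ⟨hc, hfg⟩ := hg
        have hcr := cnd_restr hc
        have heq := fixc_restr hc.1 (g := g)
        rw [Finset.mem_union]
        by_cases hl : g (Fin.last n) = Fin.last n
        · rw [if_pos hl] at heq
          right
          simp only [AA, Finset.mem_filter, Finset.mem_univ, true_and]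
          exact ⟨hcr, by omega⟩
        · rw [if_neg hl] at heq
          left
          simp only [AA, Finset.mem_filter, Finset.mem_univ, true_and]
          exact ⟨hcr, by omega⟩
      rw [Finset.card_eq_sum_card_fiberwise hmaps]
      have hdisj : Disjoint (AA n (r+1)) (AA n r) := by
        rw [Finset.disjoint_left]
        intro h h1 h2
        simp only [AA, Finset.mem_filter] at h1 h2
        omega
      rw [Finset.sum_union hdisj]
      have e1 : ∑ h ∈ AA n (r+1), ((AA (n+1) (r+1)).filter (fun g => restr g = h)).card
          = (r+1) * stirling n (r+1) := by
        calc ∑ h ∈ AA n (r+1), ((AA (n+1) (r+1)).filter (fun g => restr g = h)).card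
            = ∑ _h ∈ AA n (r+1), (r+1) := Finset.sum_congr rfl fun h hp => by
              simp only [AA, Finset.mem_filter, Finset.mem_univ, true_and] at hp
              exact fiber_card_fix hp.1 hp.2
          _ = (AA n (r+1)).card * (r+1) := by rw [Finset.sum_const, smul_eq_mul]
          _ = (r+1) * stirling n (r+1) := by rw [ih]; ring
      have e2 : ∑ h ∈ AA n r, ((AA (n+1) (r+1)).filter (fun g => restr g = h)).card
          = stirling n r := by
        calc ∑ h ∈ AA n r, ((AA (n+1) (r+1)).filter (fun g => restr g = h)).card
            = ∑ _h ∈ AA n r, 1 := Finset.sum_congr rfl fun h hp => by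
              simp only [AA, Finset.mem_filter, Finset.mem_univ, true_and] at hp
              exact fiber_card_one hp.1 hp.2
          _ = stirling n r := by rw [Finset.sum_const, smul_eq_mul, mul_one, ih]
      rw [e1, e2]

def BB (k₁ n r : ℕ) : Finset (Fin n → Fin n) :=
  univ.filter fun g => (Cnd g ∧ ∀ i, (g i).val < k₁) ∧ fixc g = r

lemma restr_val {n : ℕ} {g : Fin (n+1) → Fin (n+1)} (hg : ∀ i, g i ≤ i) (i : Fin n) :
    (restr g i).val = (g i.castSucc).val := congrArg Fin.val (restr_castSucc hg i)

lemma fiber_card_bdd {k₁ n r : ℕ} (hk : k₁ ≤ n) {h : Fin n → Fin n} (hh : Cnd h)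
    (hbd : ∀ i, (h i).val < k₁) (hf : fixc h = r) :
    ((BB k₁ (n+1) r).filter (fun g => restr g = h)).card = r := by
  have hcard : (univ.filter (fun j : Fin n => h j = j)).card = r := by
    rw [← fixc_eq_card, hf]
  refine Eq.trans ?_ hcard
  have hmem : ∀ g ∈ (BB k₁ (n+1) r).filter (fun g => restr g = h),
      Cnd g ∧ (∀ i, (g i).val < k₁) ∧ fixc g = r ∧ restr g = h := by
    intro g hg
    simp only [BB, Finset.mem_filter, Finset.mem_univ, true_and] at hg
    exact ⟨hg.1.1.1, hg.1.1.2, hg.1.2, hg.2⟩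
  have hne : ∀ g ∈ (BB k₁ (n+1) r).filter (fun g => restr g = h),
      g (Fin.last n) ≠ Fin.last n := by
    intro g hg hlast
    obtain ⟨hc, hbdg, hfg, hr⟩ := hmem g hg
    have := hbdg (Fin.last n)
    rw [hlast] at this
    simp only [Fin.val_last] at this
    omega
  refine Finset.card_bij'
    (fun g hg => (⟨(g (Fin.last n)).val, last_lt_of_ne (hne g hg)⟩ : Fin n))
    (fun b _ => extend h b.castSucc) ?_ ?_ ?_ ?_
  · intro g hg
    obtain ⟨hc, hbdg, hfg, hr⟩ := hmem g hg
    simp only [Finset.mem_filter, Finset.mem_univ, true_and]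
    rw [← hr]
    exact last_fix hc (last_lt_of_ne (hne g hg))
  · intro b hb
    simp only [Finset.mem_filter, Finset.mem_univ, true_and] at hb
    have hc := cnd_extend_fix hh hb
    have hrr := restr_extend h b.castSucc
    have hlast : extend h b.castSucc (Fin.last n) = b.castSucc := extend_last _ _
    have hnl : (b.castSucc : Fin (n+1)) ≠ Fin.last n := (Fin.castSucc_lt_last b).ne
    simp only [BB, Finset.mem_filter, Finset.mem_univ, true_and]
    refine ⟨⟨⟨hc, ?_⟩, ?_⟩, hrr⟩
    · intro i
      by_cases hi : i.val < n
      · simpa [extend, hi] using hbd ⟨i.val, hi⟩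
      · have : i = Fin.last n := by rw [Fin.ext_iff]; simp [Fin.last]; have := i.isLt; omega
        subst this
        rw [hlast]
        simp only [Fin.coe_castSucc]
        calc b.val = (h b).val := by rw [hb]
          _ < k₁ := hbd b
    · rw [fixc_restr hc.1, hrr, hlast, if_neg hnl, hf]; omega
  · intro g hg
    obtain ⟨hc, hbdg, hfg, hr⟩ := hmem g hg
    have hb : h (⟨(g (Fin.last n)).val, last_lt_of_ne (hne g hg)⟩ : Fin n) =
        ⟨(g (Fin.last n)).val, last_lt_of_ne (hne g hg)⟩ := by
      rw [← hr]; exact last_fix hc (last_lt_of_ne (hne g hg))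
    apply restr_determines (cnd_extend_fix hh hb).1 hc.1
    · rw [restr_extend, hr]
    · rw [extend_last]; exact Fin.ext rfl
  · intro b hb
    simp only [Fin.ext_iff]
    rw [extend_last]
    simp

lemma card_BB (k₁ : ℕ) : ∀ k₂ r, (BB k₁ (k₁+k₂) r).card = stirling k₁ r * r ^ k₂ := by
  intro k₂
  induction k₂ with
  | zero =>
    intro r
    have : BB k₁ (k₁+0) r = AA k₁ r := by
      unfold BB AA
      apply Finset.filter_congr
      intro g _
      constructor
      · rintro ⟨⟨hc, _⟩, hfx⟩; exact ⟨hc, hfx⟩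
      · rintro ⟨hc, hfx⟩
        refine ⟨⟨hc, fun i => ?_⟩, hfx⟩
        have := hc.1 i
        rw [Fin.le_def] at this
        have := i.isLt
        omega
    rw [this, card_AA, pow_zero, mul_one]
  | succ k₂ ih =>
    intro r
    have hk : k₁ ≤ k₁ + k₂ := Nat.le_add_right _ _
    have hmaps : ∀ g ∈ BB k₁ (k₁+k₂+1) r, restr g ∈ BB k₁ (k₁+k₂) r := by
      intro g hg
      simp only [BB, Finset.mem_filter, Finset.mem_univ, true_and] at hg ⊢
      obtain ⟨⟨hc, hbd⟩, hfg⟩ := hg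
      have hne : g (Fin.last (k₁+k₂)) ≠ Fin.last (k₁+k₂) := by
        intro hlast
        have := hbd (Fin.last (k₁+k₂))
        rw [hlast] at this
        simp only [Fin.val_last] at this
        omega
      have heq := fixc_restr hc.1 (g := g)
      rw [if_neg hne] at heq
      refine ⟨⟨cnd_restr hc, fun i => ?_⟩, by omega⟩
      rw [restr_val hc.1]
      exact hbd _
    have : (BB k₁ (k₁+(k₂+1)) r).card = (BB k₁ (k₁+k₂+1) r).card := rfl
    rw [this, Finset.card_eq_sum_card_fiberwise hmaps]
    calc ∑ h ∈ BB k₁ (k₁+k₂) r, ((BB k₁ (k₁+k₂+1) r).filter (fun g => restr g = h)).card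
        = ∑ _h ∈ BB k₁ (k₁+k₂) r, r := Finset.sum_congr rfl fun h hp => by
          simp only [BB, Finset.mem_filter, Finset.mem_univ, true_and] at hp
          exact fiber_card_bdd hk hp.1.1 hp.1.2 hp.2
      _ = (BB k₁ (k₁+k₂) r).card * r := by rw [Finset.sum_const, smul_eq_mul]
      _ = stirling k₁ r * r ^ (k₂+1) := by rw [ih]; ring

lemma fixc_le_of_bdd {k₁ n : ℕ} {g : Fin n → Fin n} (hbd : ∀ i, (g i).val < k₁) :
    fixc g ≤ k₁ := by
  rw [fixc_eq_card]
  calc (univ.filter fun i : Fin n => g i = i).card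
      ≤ (Finset.range k₁).card := by
        apply Finset.card_le_card_of_injOn (fun i => i.val)
        · intro i hi
          have hi' : g i = i := by simpa using hi
          simp only [Finset.mem_coe, Finset.mem_range]
          rw [← hi']
          exact hbd i
        · intro a _ b _ hab
          exact Fin.val_injective hab
    _ = k₁ := Finset.card_range k₁

lemma card_bdd_total (k₁ k₂ : ℕ) :
    ((univ : Finset (Fin (k₁+k₂) → Fin (k₁+k₂))).filter
      (fun g => Cnd g ∧ ∀ i, (g i).val < k₁)).card
    = ∑ r ∈ Finset.range (k₁+1), stirling k₁ r * r ^ k₂ := by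
  have hmaps : ∀ g ∈ (univ : Finset (Fin (k₁+k₂) → Fin (k₁+k₂))).filter
      (fun g => Cnd g ∧ ∀ i, (g i).val < k₁), fixc g ∈ Finset.range (k₁+1) := by
    intro g hg
    simp only [Finset.mem_filter] at hg
    rw [Finset.mem_range]
    exact Nat.lt_succ_of_le (fixc_le_of_bdd hg.2.2)
  rw [Finset.card_eq_sum_card_fiberwise hmaps]
  apply Finset.sum_congr rfl
  intro r _
  rw [Finset.filter_filter]
  have : ((univ : Finset (Fin (k₁+k₂) → Fin (k₁+k₂))).filter
      (fun g => (Cnd g ∧ ∀ i, (g i).val < k₁) ∧ fixc g = r)) = BB k₁ (k₁+k₂) r := rfl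
  rw [this, card_BB]

lemma min'_congr {β : Type*} [LinearOrder β] {s t : Finset β} (h : s = t) (hs : s.Nonempty) :
    s.min' hs = t.min' (h ▸ hs) := by subst h; rfl

section Part

variable {m : ℕ}

def pmin (P : Finpartition (univ : Finset (Fin m))) (i : Fin m) : Fin m :=
  (P.part i).min' ⟨i, P.mem_part (mem_univ i)⟩

lemma pmin_mem (P : Finpartition (univ : Finset (Fin m))) (i : Fin m) :
    pmin P i ∈ P.part i := Finset.min'_mem _ _

lemma pmin_le (P : Finpartition (univ : Finset (Fin m))) (i : Fin m) :
    pmin P i ≤ i := Finset.min'_le _ _ (P.mem_part (mem_univ i))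

lemma pmin_congr (P : Finpartition (univ : Finset (Fin m))) {i j : Fin m}
    (h : P.part i = P.part j) : pmin P i = pmin P j := by
  unfold pmin
  exact min'_congr h _

lemma part_pmin (P : Finpartition (univ : Finset (Fin m))) (i : Fin m) :
    P.part (pmin P i) = P.part i :=
  P.part_eq_of_mem (P.part_mem.2 (mem_univ i)) (pmin_mem P i)

lemma pmin_idem (P : Finpartition (univ : Finset (Fin m))) (i : Fin m) :
    pmin P (pmin P i) = pmin P i := pmin_congr P (part_pmin P i)

lemma mem_part_iff_pmin (P : Finpartition (univ : Finset (Fin m))) {i j : Fin m} :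
    j ∈ P.part i ↔ pmin P j = pmin P i := by
  constructor
  · intro hj
    exact pmin_congr P (P.part_eq_of_mem (P.part_mem.2 (mem_univ i)) hj)
  · intro hpm
    have h1 : pmin P i ∈ P.part j := by rw [← hpm]; exact pmin_mem P j
    have h2 : P.part j = P.part i :=
      P.eq_of_mem_parts (P.part_mem.2 (mem_univ j)) (P.part_mem.2 (mem_univ i)) h1 (pmin_mem P i)
    rw [← h2]
    exact P.mem_part (mem_univ j)

lemma parts_eq_of_part_eq {P Q : Finpartition (univ : Finset (Fin m))}
    (h : ∀ i, P.part i = Q.part i) : P = Q := by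
  ext X
  constructor
  · intro hX
    obtain ⟨a, ha⟩ := P.nonempty_of_mem_parts hX
    rw [← P.part_eq_of_mem hX ha, h]
    exact Q.part_mem.2 (mem_univ a)
  · intro hX
    obtain ⟨a, ha⟩ := Q.nonempty_of_mem_parts hX
    rw [← Q.part_eq_of_mem hX ha, ← h]
    exact P.part_mem.2 (mem_univ a)

noncomputable instance kerDec (g : Fin m → Fin m) : DecidableRel (Setoid.ker g).r :=
  fun a b => decidable_of_iff (g a = g b) Iff.rfl

noncomputable def funToPart (g : Fin m → Fin m) : Finpartition (univ : Finset (Fin m)) :=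
  Finpartition.ofSetoid (Setoid.ker g)

lemma mem_part_funToPart (g : Fin m → Fin m) (i j : Fin m) :
    j ∈ (funToPart g).part i ↔ g i = g j :=
  Finpartition.mem_part_ofSetoid_iff_rel

lemma pmin_funToPart {g : Fin m → Fin m} (hc : Cnd g) (i : Fin m) :
    pmin (funToPart g) i = g i := by
  apply le_antisymm
  · apply Finset.min'_le
    rw [mem_part_funToPart]
    exact (hc.2 i).symm
  · have hmem := pmin_mem (funToPart g) i
    rw [mem_part_funToPart] at hmem
    calc g i = g (pmin (funToPart g) i) := hmem
      _ ≤ pmin (funToPart g) i := hc.1 _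

noncomputable def partEquiv (m : ℕ) :
    Finpartition (univ : Finset (Fin m)) ≃ {g : Fin m → Fin m // Cnd g} where
  toFun P := ⟨pmin P, pmin_le P, pmin_idem P⟩
  invFun g := funToPart g.1
  left_inv P := by
    apply parts_eq_of_part_eq
    intro i
    ext j
    rw [mem_part_funToPart, mem_part_iff_pmin]
    exact eq_comm
  right_inv g := Subtype.ext (funext fun i => pmin_funToPart g.2 i)

end Part

lemma surj_sum (N : ℕ) : ∀ k, ∑ j ∈ Finset.range (N+1), N.choose j * j ! * stirling k j = N ^ k := by
  intro k
  induction k with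
  | zero =>
    rw [pow_zero]
    rw [Finset.sum_eq_single_of_mem 0 (Finset.mem_range.mpr (Nat.succ_pos N))]
    · simp [show stirling 0 0 = 1 from rfl]
    · intro j _ hj
      match j, hj with
      | j+1, _ => simp [show stirling 0 (j+1) = 0 from rfl]
  | succ k ih =>
    rw [Finset.sum_range_succ']
    rw [show stirling (k+1) 0 = 0 from rfl]
    simp only [mul_zero, add_zero]
    have step : ∀ i ∈ Finset.range N,
        N.choose (i+1) * (i+1)! * stirling (k+1) (i+1)
        = (i+1) * (N.choose (i+1) * (i+1)! * stirling k (i+1))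
          + (N - i) * (N.choose i * i ! * stirling k i) := by
      intro i _
      have hch : N.choose (i+1) * (i+1) = N.choose i * (N - i) := Nat.choose_succ_right_eq N i
      rw [show stirling (k+1) (i+1) = (i+1) * stirling k (i+1) + stirling k i from rfl]
      calc N.choose (i+1) * (i+1)! * ((i+1) * stirling k (i+1) + stirling k i)
          = (i+1) * (N.choose (i+1) * (i+1)! * stirling k (i+1))
            + (N.choose (i+1) * (i+1)) * i ! * stirling k i := by
            rw [Nat.factorial_succ]; ring
        _ = _ := by rw [hch]; ring
    rw [Finset.sum_congr rfl step, Finset.sum_add_distrib]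
    have hS1 : ∑ i ∈ Finset.range N, (i+1) * (N.choose (i+1) * (i+1)! * stirling k (i+1))
        = ∑ j ∈ Finset.range (N+1), j * (N.choose j * j ! * stirling k j) := by
      rw [Finset.sum_range_succ']
      simp
    have hS2 : ∑ i ∈ Finset.range N, (N - i) * (N.choose i * i ! * stirling k i)
        = ∑ j ∈ Finset.range (N+1), (N - j) * (N.choose j * j ! * stirling k j) := by
      rw [Finset.sum_range_succ]
      simp
    rw [hS1, hS2, ← Finset.sum_add_distrib]
    calc ∑ j ∈ Finset.range (N+1),
          (j * (N.choose j * j ! * stirling k j) + (N - j) * (N.choose j * j ! * stirling k j))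
        = ∑ j ∈ Finset.range (N+1), N * (N.choose j * j ! * stirling k j) := by
          apply Finset.sum_congr rfl
          intro j hj
          rw [Finset.mem_range] at hj
          rw [← add_mul, show j + (N - j) = N by omega]
      _ = N * ∑ j ∈ Finset.range (N+1), N.choose j * j ! * stirling k j :=
          (Finset.mul_sum _ _ _).symm
      _ = N ^ (k+1) := by rw [ih]; ring

/-- Set partitions of `{1,…,k₁+k₂}` (0-indexed as `Fin (k₁+k₂)`) in which every block
has its minimum among the first `k₁` elements. -/
theorem stmt16 (k₁ k₂ : ℕ) (h₁ : 1 ≤ k₁) :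
    Nat.card {P : Finpartition (Finset.univ : Finset (Fin (k₁ + k₂))) //
      ∀ X ∈ P.parts, ∀ h : X.Nonempty, (X.min' h : ℕ) < k₁} =
    ∑ j ∈ Finset.range (k₁ + k₂ + 1),
      j ! * (∑ r ∈ Finset.range (k₁ + 1), r.choose j * stirling k₁ r) * stirling k₂ j := by
  classical
  have hiff : ∀ P : Finpartition (Finset.univ : Finset (Fin (k₁ + k₂))),
      (∀ X ∈ P.parts, ∀ h : X.Nonempty, (X.min' h : ℕ) < k₁) ↔
      (∀ i, (((partEquiv (k₁+k₂)) P).1 i).val < k₁) := by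
    intro P
    constructor
    · intro hP i
      simp only [partEquiv, Equiv.coe_fn_mk]
      exact hP (P.part i) (P.part_mem.2 (mem_univ i)) ⟨i, P.mem_part (mem_univ i)⟩
    · intro hP X hX h
      have ha : X.min' h ∈ X := X.min'_mem h
      have hpa : P.part (X.min' h) = X := P.part_eq_of_mem hX ha
      have he : pmin P (X.min' h) = X.min' h := by
        have := min'_congr hpa (⟨X.min' h, P.mem_part (mem_univ _)⟩ : (P.part (X.min' h)).Nonempty)
        rw [pmin, this]
      have := hP (X.min' h)
      simp only [partEquiv, Equiv.coe_fn_mk] at this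
      rw [he] at this
      exact this
  have hcount : Nat.card {P : Finpartition (Finset.univ : Finset (Fin (k₁ + k₂))) //
      ∀ X ∈ P.parts, ∀ h : X.Nonempty, (X.min' h : ℕ) < k₁}
      = ∑ r ∈ Finset.range (k₁+1), stirling k₁ r * r ^ k₂ := by
    have E : {P : Finpartition (Finset.univ : Finset (Fin (k₁ + k₂))) //
        ∀ X ∈ P.parts, ∀ h : X.Nonempty, (X.min' h : ℕ) < k₁}
        ≃ {g : Fin (k₁+k₂) → Fin (k₁+k₂) // Cnd g ∧ ∀ i, (g i).val < k₁} :=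
      ((partEquiv (k₁+k₂)).subtypeEquiv (q := fun g => ∀ i, (g.1 i).val < k₁) hiff).trans
        (Equiv.subtypeSubtypeEquivSubtypeInter (fun g : Fin (k₁+k₂) → Fin (k₁+k₂) => Cnd g)
          (fun g => ∀ i, (g i).val < k₁))
    rw [Nat.card_congr E, Nat.card_eq_fintype_card, Fintype.card_subtype]
    exact card_bdd_total k₁ k₂
  rw [hcount]
  have hswap : ∑ j ∈ Finset.range (k₁+k₂+1),
        j ! * (∑ r ∈ Finset.range (k₁+1), r.choose j * stirling k₁ r) * stirling k₂ j
      = ∑ r ∈ Finset.range (k₁+1),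
          stirling k₁ r * ∑ j ∈ Finset.range (k₁+k₂+1), r.choose j * j ! * stirling k₂ j := by
    have hterm : ∀ j ∈ Finset.range (k₁+k₂+1),
        j ! * (∑ r ∈ Finset.range (k₁+1), r.choose j * stirling k₁ r) * stirling k₂ j
        = ∑ r ∈ Finset.range (k₁+1), stirling k₁ r * (r.choose j * j ! * stirling k₂ j) := by
      intro j _
      rw [Finset.mul_sum, Finset.sum_mul]
      apply Finset.sum_congr rfl
      intro r _
      ring
    rw [Finset.sum_congr rfl hterm, Finset.sum_comm]
    apply Finset.sum_congr rfl
    intro r _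
    rw [Finset.mul_sum]
  rw [hswap]
  apply Finset.sum_congr rfl
  intro r hr
  rw [Finset.mem_range] at hr
  congr 1
  rw [← surj_sum r k₂]
  refine Finset.sum_subset ?_ ?_
  · rw [Finset.range_subset_range]
    omega
  · intro j _ hj
    rw [Finset.mem_range] at hj
    rw [Nat.choose_eq_zero_of_lt (by omega), zero_mul, zero_mul]
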